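/- Fix s ∈ X_fin. Then ∑_{k=0}^∞ m^k/(u_{2k+1}(s) − u_{2k}(s)) = +∞ in [0,∞], with the convention that a term with zero denominator is +∞. Consequently, R_N(s) → +∞ and Cap_N(s) := 1/R_N(s) → 0 as N → ∞. -/

import Mathlib

open Filter Topology
open scoped BigOperators ComplexOrder ENNReal

/-- A kernel `J : X × X → ℂ` is positive definite: every finite Gram sum
`∑ conj (c α) * c β * J (s α) (s β)` is a nonnegative real number
(using the partial order on `ℂ`). -/
def IsPD {X : Type*} (J : X → X → ℂ) : Prop :=
  ∀ (r : ℕ) (c : Fin r → ℂ) (p : Fin r → X),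
    0 ≤ ∑ α, ∑ β, (starRingEnd ℂ) (c α) * c β * J (p α) (p β)

/-- The pullback operator `(LJ)(s,t) = ∑ i, J (φ i s) (φ i t)`. -/
noncomputable def pullback {X : Type*} (m : ℕ) (φ : Fin m → X → X) (J : X → X → ℂ) :
    X → X → ℂ :=
  fun s t => ∑ i, J (φ i s) (φ i t)

/-- For a word `w = i₁⋯iₙ ∈ {1,…,m}ⁿ`, `phiW φ w = φ_{iₙ} ∘ ⋯ ∘ φ_{i₁}`. -/
def phiW {X : Type*} {m : ℕ} (φ : Fin m → X → X) : {n : ℕ} → (Fin n → Fin m) → X → X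
  | 0, _, x => x
  | n + 1, w, x => φ (w (Fin.last n)) (phiW φ (fun i => w i.castSucc) x)

/-- The tower `K₀ = K`, `K_{n+1} = L Kₙ`. -/
noncomputable def tower {X : Type*} (m : ℕ) (φ : Fin m → X → X) (K : X → X → ℂ) :
    ℕ → X → X → ℂ
  | 0 => K
  | n + 1 => pullback m φ (tower m φ K n)

/-- The diagonal `uₙ(s) = Kₙ(s,s)` (a real number, as `Kₙ` is p.d.). -/
noncomputable def diag {X : Type*} (m : ℕ) (φ : Fin m → X → X) (K : X → X → ℂ)
    (n : ℕ) (s : X) : ℝ :=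
  (tower m φ K n s s).re

/-- The diagonal increment `a_s(w) = u_{|w|+1}(φ_w s) − u_{|w|}(φ_w s)`. -/
noncomputable def incr {X : Type*} (m : ℕ) (φ : Fin m → X → X) (K : X → X → ℂ)
    (s : X) {k : ℕ} (w : Fin k → Fin m) : ℝ :=
  diag m φ K (k + 1) (phiW φ w s) - diag m φ K k (phiW φ w s)

/-- A unit flow to depth `N` on the rooted `m`-ary word tree:
`θ k w i` is the flow through the edge `(w, wi)` with `|w| = k`. -/
def IsUnitFlow (m N : ℕ) (θ : (k : ℕ) → (Fin k → Fin m) → Fin m → ℝ) : Prop :=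
  (∀ k, k < N → ∀ (w : Fin k → Fin m) (i : Fin m), 0 ≤ θ k w i) ∧
  (∑ i : Fin m, θ 0 (fun j => j.elim0) i = 1) ∧
  (∀ k, k + 1 < N → ∀ (w : Fin k → Fin m) (i : Fin m),
    θ k w i = ∑ j : Fin m, θ (k + 1) (Fin.snoc w i) j)

/-- The energy `𝔈_s(θ) = ∑_e θ(e)² / c_s(e) ∈ [0,∞]`, where the edge `(w,wi)`
has conductance `c_s(w,wi) = a_s(w)/m^{|w|+1}` (with `0/0 = 0` and `x/0 = ∞`
for `x > 0`, as in `ℝ≥0∞`). -/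
noncomputable def energy {X : Type*} (m : ℕ) (φ : Fin m → X → X) (K : X → X → ℂ)
    (s : X) (N : ℕ) (θ : (k : ℕ) → (Fin k → Fin m) → Fin m → ℝ) : ℝ≥0∞ :=
  ∑ k ∈ Finset.range N, ∑ w : Fin k → Fin m, ∑ i : Fin m,
    ENNReal.ofReal (θ k w i) ^ 2 / ENNReal.ofReal (incr m φ K s w / (m : ℝ) ^ (k + 1))

/-- The effective resistance `R_N(s)`: infimum of the energy over unit flows to depth `N`. -/
noncomputable def resistance {X : Type*} (m : ℕ) (φ : Fin m → X → X) (K : X → X → ℂ)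
    (s : X) (N : ℕ) : ℝ≥0∞ :=
  ⨅ (θ : (k : ℕ) → (Fin k → Fin m) → Fin m → ℝ) (_ : IsUnitFlow m N θ),
    energy m φ K s N θ

/-- The scalar series `S(s) = ∑ₖ m^k / (u_{2k+1}(s) − u_{2k}(s)) ∈ [0,∞]`
(a term with zero denominator being `+∞`). -/
noncomputable def Sser {X : Type*} (m : ℕ) (φ : Fin m → X → X) (K : X → X → ℂ)
    (s : X) : ℝ≥0∞ :=
  ∑' k : ℕ,
    (m : ℝ≥0∞) ^ k / ENNReal.ofReal (diag m φ K (2 * k + 1) s - diag m φ K (2 * k) s)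

/-- The finiteness locus `X_fin = {s : u_∞(s) = lim uₙ(s) < ∞}` (the monotone
sequence `uₙ(s)` has a finite limit). -/
def Xfin {X : Type*} (m : ℕ) (φ : Fin m → X → X) (K : X → X → ℂ) : Set X :=
  {s | ∃ l : ℝ, Filter.Tendsto (fun n => diag m φ K n s) Filter.atTop (nhds l)}

/-! A unit flow passes total flow 1 through the edges at each depth `k`, while the conductances
at depth `k` add up to `(u_{2k+1}(s) - u_{2k}(s)) / m^k`, because summing `u_n ∘ φ_w` over the
words `w` of length `k` gives `u_{n+k}`. By Cauchy–Schwarz every unit flow to depth `N > k` thus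
has energy at least `m^k / (u_{2k+1}(s) - u_{2k}(s))`, the `k`-th term of the series. For
`s ∈ X_fin` the gaps `u_{2k+1}(s) - u_{2k}(s)` tend to `0`, so these terms tend to `∞`: the
series diverges and `R_N(s) → ∞`. -/

lemma Fintype.sum_fin_succ_pi_snoc {α M : Type*} [Fintype α] [AddCommMonoid M] (k : ℕ)
    (f : (Fin (k + 1) → α) → M) :
    ∑ w, f w = ∑ w : Fin k → α, ∑ i, f (Fin.snoc w i) := by
  rw [← (Fin.snocEquiv fun _ => α).sum_comp, Fintype.sum_prod_type, Finset.sum_comm]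
  rfl

lemma ENNReal.inv_sum_ofReal_le_sum_ofReal_sq_div {ι : Type*} (s : Finset ι) {θ c : ι → ℝ}
    (hθ : ∀ i ∈ s, 0 ≤ θ i) (hc : ∀ i ∈ s, 0 ≤ c i) (hsum : ∑ i ∈ s, θ i = 1) :
    (∑ i ∈ s, ENNReal.ofReal (c i))⁻¹ ≤
      ∑ i ∈ s, ENNReal.ofReal (θ i) ^ 2 / ENNReal.ofReal (c i) := by
  by_cases hcut : ∃ i ∈ s, c i = 0 ∧ θ i ≠ 0
  · obtain ⟨i, hi, hci, hθi⟩ := hcut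
    have hterm : ENNReal.ofReal (θ i) ^ 2 / ENNReal.ofReal (c i) = ⊤ := by
      rw [hci, ENNReal.ofReal_zero]
      exact ENNReal.div_zero (pow_ne_zero 2 (by simpa using (hθ i hi).lt_of_ne' hθi))
    exact le_top.trans_eq (ENNReal.sum_eq_top.2 ⟨i, hi, hterm⟩).symm
  push Not at hcut
  have hcs : (∑ i ∈ s, θ i) ^ 2 ≤ (∑ i ∈ s, θ i ^ 2 / c i) * ∑ i ∈ s, c i := by
    refine Finset.sum_sq_le_sum_mul_sum_of_sq_le_mul s
      (fun i hi => div_nonneg (sq_nonneg _) (hc i hi)) hc fun i hi => ?_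
    rcases (hc i hi).eq_or_lt' with hci | hci
    · simp [hcut i hi hci]
    · rw [div_mul_cancel₀ _ hci.ne']
  rw [hsum, one_pow] at hcs
  have hC : 0 < ∑ i ∈ s, c i := (Finset.sum_nonneg hc).lt_of_ne fun h => by
    rw [← h, mul_zero] at hcs
    norm_num at hcs
  calc (∑ i ∈ s, ENNReal.ofReal (c i))⁻¹ = ENNReal.ofReal (∑ i ∈ s, c i)⁻¹ := by
        rw [← ENNReal.ofReal_sum_of_nonneg hc, ENNReal.ofReal_inv_of_pos hC]
    _ ≤ ENNReal.ofReal (∑ i ∈ s, θ i ^ 2 / c i) :=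
        ENNReal.ofReal_le_ofReal ((inv_le_iff_one_le_mul₀ hC).2 hcs)
    _ = ∑ i ∈ s, ENNReal.ofReal (θ i ^ 2 / c i) :=
        ENNReal.ofReal_sum_of_nonneg fun i hi => div_nonneg (sq_nonneg _) (hc i hi)
    _ ≤ ∑ i ∈ s, ENNReal.ofReal (θ i) ^ 2 / ENNReal.ofReal (c i) :=
        Finset.sum_le_sum fun i hi =>
          (ENNReal.ofReal_div_le (hc i hi)).trans_eq (by rw [ENNReal.ofReal_pow (hθ i hi)])

section PositiveDefinite

variable {X : Type*} {m : ℕ} {φ : Fin m → X → X} {K : X → X → ℂ}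

lemma IsPD.re_apply_self_nonneg {J : X → X → ℂ} (hJ : IsPD J) (x : X) : 0 ≤ (J x x).re := by
  have h := hJ 1 (fun _ => 1) (fun _ => x)
  simp only [Fin.sum_univ_one, map_one, one_mul] at h
  exact (Complex.le_def.mp h).1

lemma isPD_pullback {J : X → X → ℂ} (hJ : IsPD J) : IsPD (pullback m φ J) := by
  intro r c p
  have hsum : ∑ i : Fin m, ∑ α, ∑ β, (starRingEnd ℂ) (c α) * c β * J (φ i (p α)) (φ i (p β))
      = ∑ α, ∑ β, (starRingEnd ℂ) (c α) * c β * pullback m φ J (p α) (p β) := by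
    rw [Finset.sum_comm]
    refine Finset.sum_congr rfl fun α _ => ?_
    rw [Finset.sum_comm]
    exact Finset.sum_congr rfl fun β _ => (Finset.mul_sum _ _ _).symm
  rw [← hsum]
  exact Finset.sum_nonneg fun i _ => hJ r c fun α => φ i (p α)

lemma pullback_sub (J J' : X → X → ℂ) :
    pullback m φ (fun s t => J s t - J' s t)
      = fun s t => pullback m φ J s t - pullback m φ J' s t := by
  funext s t
  simp only [pullback, Finset.sum_sub_distrib]

lemma isPD_tower_succ_sub (hsub : IsPD (fun s t => pullback m φ K s t - K s t)) (n : ℕ) :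
    IsPD (fun s t => tower m φ K (n + 1) s t - tower m φ K n s t) := by
  induction n with
  | zero => exact hsub
  | succ n ih =>
    have h := isPD_pullback (φ := φ) ih
    rwa [pullback_sub] at h

lemma incr_nonneg (hsub : IsPD (fun s t => pullback m φ K s t - K s t)) (s : X) {k : ℕ}
    (w : Fin k → Fin m) : 0 ≤ incr m φ K s w := by
  simpa [incr, diag] using (isPD_tower_succ_sub hsub k).re_apply_self_nonneg (phiW φ w s)

end PositiveDefinite

section Words

variable {X : Type*} {m : ℕ} {φ : Fin m → X → X} {K : X → X → ℂ}

lemma phiW_snoc {k : ℕ} (w : Fin k → Fin m) (i : Fin m) (x : X) :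
    phiW φ (Fin.snoc w i) x = φ i (phiW φ w x) := by
  simp [phiW]

lemma diag_succ (n : ℕ) (x : X) :
    diag m φ K (n + 1) x = ∑ i, diag m φ K n (φ i x) := by
  simp [diag, tower, pullback, Complex.re_sum]

lemma sum_diag_phiW (k n : ℕ) (s : X) :
    ∑ w : Fin k → Fin m, diag m φ K n (phiW φ w s) = diag m φ K (n + k) s := by
  induction k generalizing n with
  | zero => rw [Fintype.sum_unique]; rfl
  | succ k ih =>
    simp only [Fintype.sum_fin_succ_pi_snoc, phiW_snoc, ← diag_succ, ih]
    rw [Nat.add_right_comm, Nat.add_assoc]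

lemma sum_incr (s : X) (k : ℕ) :
    ∑ w : Fin k → Fin m, incr m φ K s w = diag m φ K (2 * k + 1) s - diag m φ K (2 * k) s := by
  simp only [incr, Finset.sum_sub_distrib, sum_diag_phiW]
  congr 2 <;> ring

end Words

section Flows

variable {m N : ℕ} {θ : (k : ℕ) → (Fin k → Fin m) → Fin m → ℝ}

lemma IsUnitFlow.sum_level_eq_one (h : IsUnitFlow m N θ) {k : ℕ} (hk : k < N) :
    ∑ w : Fin k → Fin m, ∑ i, θ k w i = 1 := by
  induction k with
  | zero =>
    rw [Fintype.sum_unique, Subsingleton.elim default fun j => j.elim0]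
    exact h.2.1
  | succ k ih =>
    rw [Fintype.sum_fin_succ_pi_snoc, ← ih (by omega)]
    exact Finset.sum_congr rfl fun w _ =>
      Finset.sum_congr rfl fun i _ => (h.2.2 k hk w i).symm

lemma IsUnitFlow.arity_pos (h : IsUnitFlow m N θ) : 0 < m := by
  rcases Nat.eq_zero_or_pos m with rfl | hm
  · simpa using h.2.1
  · exact hm

end Flows

section Resistance

variable {X : Type*} {m : ℕ} {φ : Fin m → X → X} {K : X → X → ℂ}

lemma sum_conductance_level (hsub : IsPD (fun s t => pullback m φ K s t - K s t)) (hm : 0 < m)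
    (s : X) (k : ℕ) :
    ∑ p : (Fin k → Fin m) × Fin m, ENNReal.ofReal (incr m φ K s p.1 / (m : ℝ) ^ (k + 1))
      = ENNReal.ofReal (diag m φ K (2 * k + 1) s - diag m φ K (2 * k) s) / (m : ℝ≥0∞) ^ k := by
  have hmR : (0 : ℝ) < m := Nat.cast_pos.2 hm
  have hreal : ∑ p : (Fin k → Fin m) × Fin m, incr m φ K s p.1 / (m : ℝ) ^ (k + 1)
      = (diag m φ K (2 * k + 1) s - diag m φ K (2 * k) s) / (m : ℝ) ^ k := by
    simp only [Fintype.sum_prod_type, Finset.sum_const, Finset.card_univ, Fintype.card_fin,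
      nsmul_eq_mul, ← Finset.mul_sum, ← Finset.sum_div, sum_incr]
    field_simp
    ring
  rw [← ENNReal.ofReal_sum_of_nonneg fun p _ =>
      div_nonneg (incr_nonneg hsub s p.1) (by positivity),
    hreal, ENNReal.ofReal_div_of_pos (by positivity), ENNReal.ofReal_pow hmR.le,
    ENNReal.ofReal_natCast]

lemma pow_div_gap_le_energy (hsub : IsPD (fun s t => pullback m φ K s t - K s t)) (s : X)
    {N : ℕ} {θ : (k : ℕ) → (Fin k → Fin m) → Fin m → ℝ} (hθ : IsUnitFlow m N θ) {k : ℕ}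
    (hk : k < N) :
    (m : ℝ≥0∞) ^ k / ENNReal.ofReal (diag m φ K (2 * k + 1) s - diag m φ K (2 * k) s)
      ≤ energy m φ K s N θ := by
  have hm := hθ.arity_pos
  have hflow : ∑ p : (Fin k → Fin m) × Fin m, θ k p.1 p.2 = 1 := by
    rw [Fintype.sum_prod_type]
    exact hθ.sum_level_eq_one hk
  calc (m : ℝ≥0∞) ^ k / ENNReal.ofReal (diag m φ K (2 * k + 1) s - diag m φ K (2 * k) s)
      = (∑ p : (Fin k → Fin m) × Fin m,
          ENNReal.ofReal (incr m φ K s p.1 / (m : ℝ) ^ (k + 1)))⁻¹ := by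
        rw [sum_conductance_level hsub hm, ENNReal.inv_div (Or.inl (by simp))
          (Or.inl (pow_ne_zero _ (by exact_mod_cast hm.ne')))]
    _ ≤ ∑ p : (Fin k → Fin m) × Fin m, ENNReal.ofReal (θ k p.1 p.2) ^ 2 /
          ENNReal.ofReal (incr m φ K s p.1 / (m : ℝ) ^ (k + 1)) :=
        ENNReal.inv_sum_ofReal_le_sum_ofReal_sq_div _ (fun p _ => hθ.1 k hk p.1 p.2)
          (fun p _ => div_nonneg (incr_nonneg hsub s p.1) (by positivity)) hflow
    _ ≤ energy m φ K s N θ := by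
        rw [Fintype.sum_prod_type]
        exact Finset.single_le_sum (f := fun k => ∑ w : Fin k → Fin m, ∑ i,
            ENNReal.ofReal (θ k w i) ^ 2 / ENNReal.ofReal (incr m φ K s w / (m : ℝ) ^ (k + 1)))
          (fun _ _ => zero_le) (Finset.mem_range.2 hk)

lemma pow_div_gap_le_resistance (hsub : IsPD (fun s t => pullback m φ K s t - K s t)) (s : X)
    {N k : ℕ} (hk : k < N) :
    (m : ℝ≥0∞) ^ k / ENNReal.ofReal (diag m φ K (2 * k + 1) s - diag m φ K (2 * k) s)
      ≤ resistance m φ K s N :=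
  le_iInf₂ fun _ hθ => pow_div_gap_le_energy hsub s hθ hk

end Resistance

lemma tendsto_pow_div_gap_nhds_top {X : Type*} {m : ℕ} (hm : 1 ≤ m) {φ : Fin m → X → X}
    {K : X → X → ℂ} {s : X} (hs : s ∈ Xfin m φ K) :
    Tendsto (fun k => (m : ℝ≥0∞) ^ k /
      ENNReal.ofReal (diag m φ K (2 * k + 1) s - diag m φ K (2 * k) s)) atTop (𝓝 ⊤) := by
  obtain ⟨l, hl⟩ := hs
  have hgap :
      Tendsto (fun k => diag m φ K (2 * k + 1) s - diag m φ K (2 * k) s) atTop (𝓝 0) := by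
    have hdouble : Tendsto (fun k : ℕ => 2 * k) atTop atTop :=
      tendsto_id.const_mul_atTop' two_pos
    simpa using (((tendsto_add_atTop_iff_nat 1).2 hl).comp hdouble).sub (hl.comp hdouble)
  have hinv : Tendsto (fun k =>
      (ENNReal.ofReal (diag m φ K (2 * k + 1) s - diag m φ K (2 * k) s))⁻¹) atTop (𝓝 ⊤) := by
    simpa using (ENNReal.tendsto_ofReal hgap).inv
  refine tendsto_nhds_top_mono' hinv fun k => ?_
  rw [← one_div]
  exact ENNReal.div_le_div_right (one_le_pow₀ (by exact_mod_cast hm)) _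

theorem stmt9_general {X : Type*} (m : ℕ) (hm : 1 ≤ m) (φ : Fin m → X → X)
    (K : X → X → ℂ)
    (hsub : IsPD (fun s t => pullback m φ K s t - K s t))
    (s : X) (hs : s ∈ Xfin m φ K) :
    Sser m φ K s = ⊤ ∧
    Tendsto (fun N => resistance m φ K s N) atTop (𝓝 ⊤) ∧
    Tendsto (fun N => (resistance m φ K s N)⁻¹) atTop (𝓝 (0 : ℝ≥0∞)) := by
  have hterm := tendsto_pow_div_gap_nhds_top hm hs
  have hR : Tendsto (fun N => resistance m φ K s N) atTop (𝓝 ⊤) :=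
    (tendsto_add_atTop_iff_nat 1).1 <| tendsto_nhds_top_mono' hterm fun k =>
      pow_div_gap_le_resistance hsub s k.lt_succ_self
  refine ⟨?_, hR, by simpa using hR.inv⟩
  by_contra hfin
  exact ENNReal.zero_ne_top
    (tendsto_nhds_unique (ENNReal.tendsto_atTop_zero_of_tsum_ne_top hfin) hterm)

/-- For `s ∈ X_fin`, the scalar series `S(s)` diverges; consequently
`R_N(s) → ∞` and `Cap_N(s) = 1/R_N(s) → 0` as `N → ∞`. -/
theorem stmt9 {X : Type*} (m : ℕ) (hm : 1 ≤ m) (φ : Fin m → X → X)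
    (K : X → X → ℂ) (hK : IsPD K)
    (hsub : IsPD (fun s t => pullback m φ K s t - K s t))
    (s : X) (hs : s ∈ Xfin m φ K) :
    Sser m φ K s = ⊤ ∧
    Tendsto (fun N => resistance m φ K s N) atTop (𝓝 ⊤) ∧
    Tendsto (fun N => (resistance m φ K s N)⁻¹) atTop (𝓝 (0 : ℝ≥0∞)) :=
  stmt9_general m hm φ K hsub s hs
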